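/- For any tree t on n vertices, D_max(t) ≥ n(n-1)/2; that is, every tree admits a linear arrangement whose sum of edge lengths is at least the sum 1 + 2 + ... + (n-1). -/

import Mathlib

open Finset

/-- The length of an edge under a linear arrangement `π` (positions `0,…,n-1`,
which gives the same lengths as positions `1,…,n`). -/
def edgeLen {n : ℕ} (π : Equiv.Perm (Fin n)) : Sym2 (Fin n) → ℕ :=
  Sym2.lift ⟨fun u v => ((π u : ℤ) - (π v : ℤ)).natAbs, fun u v => by dsimp only; omega⟩

/-- The sum of edge lengths of the graph `G` under the linear arrangement `π`. -/
def D {n : ℕ} (G : SimpleGraph (Fin n)) [DecidableRel G.Adj] (π : Equiv.Perm (Fin n)) : ℕ :=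
  ∑ e ∈ G.edgeFinset, edgeLen π e

/-- The maximum of `D` over all linear arrangements. -/
def Dmax {n : ℕ} (G : SimpleGraph (Fin n)) [DecidableRel G.Adj] : ℕ :=
  Finset.univ.sup (D G)

/-- The minimum of `D` over all linear arrangements. -/
def Dmin {n : ℕ} (G : SimpleGraph (Fin n)) [DecidableRel G.Adj] : ℕ :=
  Finset.univ.inf' ⟨Equiv.refl _, Finset.mem_univ _⟩ (D G)

/-- The path graph (linear tree) on `n` vertices. -/
def pathG (n : ℕ) : SimpleGraph (Fin n) where
  Adj u v := (u : ℕ) + 1 = v ∨ (v : ℕ) + 1 = u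
  symm.symm u v h := h.symm
  loopless.irrefl u h := by omega

instance (n : ℕ) : DecidableRel (pathG n).Adj :=
  fun u v => inferInstanceAs (Decidable (_ ∨ _))

/-- The star tree on `n` vertices, with hub at vertex `0`. -/
def starG (n : ℕ) : SimpleGraph (Fin n) where
  Adj u v := u ≠ v ∧ ((u : ℕ) = 0 ∨ (v : ℕ) = 0)
  symm.symm u v h := ⟨h.1.symm, h.2.symm⟩
  loopless.irrefl u h := h.1 rfl

instance (n : ℕ) : DecidableRel (starG n).Adj :=
  fun u v => inferInstanceAs (Decidable (_ ∧ _))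

/-- The bistar tree on `n` vertices with hub degrees `k1` and `n - k1`:
vertex `0` is a hub adjacent to vertex `1` and to the leaves `2,…,k1`;
vertex `1` is a hub adjacent to vertex `0` and to the leaves `k1+1,…,n-1`. -/
def bistarG (n k1 : ℕ) : SimpleGraph (Fin n) where
  Adj u v := u ≠ v ∧
    (((u : ℕ) = 0 ∧ ((v : ℕ) = 1 ∨ (2 ≤ (v : ℕ) ∧ (v : ℕ) ≤ k1))) ∨
     ((v : ℕ) = 0 ∧ ((u : ℕ) = 1 ∨ (2 ≤ (u : ℕ) ∧ (u : ℕ) ≤ k1))) ∨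
     ((u : ℕ) = 1 ∧ k1 < (v : ℕ)) ∨
     ((v : ℕ) = 1 ∧ k1 < (u : ℕ)))
  symm.symm u v h := ⟨h.1.symm, by tauto⟩
  loopless.irrefl u h := h.1 rfl

instance (n k1 : ℕ) : DecidableRel (bistarG n k1).Adj :=
  fun u v => inferInstanceAs (Decidable (_ ∧ _))

/-- The sum of the lengths of the edges incident to vertex `i` under arrangement `π`. -/
def Dinc {n : ℕ} (G : SimpleGraph (Fin n)) [DecidableRel G.Adj] (i : Fin n)
    (π : Equiv.Perm (Fin n)) : ℕ :=
  ∑ v ∈ G.neighborFinset i, ((π i : ℤ) - (π v : ℤ)).natAbs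

/-!
A tree is bipartite; let `s` be one colour class. Place `s` before its complement, and
alternatively the complement before `s`, keeping the order inside each block. An edge joining the
`i`-th vertex of `s` to the `j`-th vertex of `sᶜ` has length `#s + j - i` in the first
arrangement and `#sᶜ + i - j` in the second, so the two lengths add up to `n`. Summing over the
`n - 1` edges, the two arrangements have total length `n (n - 1)`, so one of them has at least
half of it.
-/

section FinSumEquivOfFinset

variable {α : Type*} [Fintype α] [LinearOrder α] [DecidableEq α] {s : Finset α} {a : α}

lemma exists_finSumEquivOfFinset_symm_eq_inl (ha : a ∈ s) :
    ∃ i : Fin #s, (finSumEquivOfFinset rfl rfl).symm a = Sum.inl i := by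
  rcases h : (finSumEquivOfFinset (s := s) rfl rfl).symm a with i | j
  · exact ⟨i, rfl⟩
  · rw [Equiv.symm_apply_eq, finSumEquivOfFinset_inr] at h
    exact absurd (h ▸ sᶜ.orderEmbOfFin_mem rfl j) (by simpa using ha)

lemma exists_finSumEquivOfFinset_symm_eq_inr (ha : a ∉ s) :
    ∃ j : Fin #sᶜ, (finSumEquivOfFinset rfl rfl).symm a = Sum.inr j := by
  rcases h : (finSumEquivOfFinset (s := s) rfl rfl).symm a with i | j
  · rw [Equiv.symm_apply_eq, finSumEquivOfFinset_inl] at h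
    exact absurd (h ▸ s.orderEmbOfFin_mem rfl i) ha
  · exact ⟨j, rfl⟩

end FinSumEquivOfFinset

namespace Finset

variable {n : ℕ} (s : Finset (Fin n))

def arrangeFirst : Equiv.Perm (Fin n) :=
  (finSumEquivOfFinset rfl rfl).symm.trans
    (finSumFinEquiv.trans (finCongr ((card_add_card_compl s).trans (Fintype.card_fin n))))

def arrangeLast : Equiv.Perm (Fin n) :=
  (finSumEquivOfFinset rfl rfl).symm.trans ((Equiv.sumComm _ _).trans
    (finSumFinEquiv.trans
      (finCongr ((add_comm _ _).trans ((card_add_card_compl s).trans (Fintype.card_fin n))))))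

variable {s}

lemma edgeLen_arrangeFirst_add_edgeLen_arrangeLast {u v : Fin n} (hu : u ∈ s) (hv : v ∉ s) :
    edgeLen (arrangeFirst s) s(u, v) + edgeLen (arrangeLast s) s(u, v) = n := by
  obtain ⟨i, hi⟩ := exists_finSumEquivOfFinset_symm_eq_inl hu
  obtain ⟨j, hj⟩ := exists_finSumEquivOfFinset_symm_eq_inr hv
  have hn : #s + #sᶜ = n := (card_add_card_compl s).trans (Fintype.card_fin n)
  simp only [edgeLen, Sym2.lift_mk, arrangeFirst, arrangeLast, Equiv.trans_apply, hi, hj,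
    Equiv.sumComm_apply, Sum.swap_inl, Sum.swap_inr, finSumFinEquiv_apply_left,
    finSumFinEquiv_apply_right, finCongr_apply, Fin.val_cast, Fin.val_castAdd, Fin.val_natAdd]
  have := i.isLt
  have := j.isLt
  omega

lemma D_arrangeFirst_add_D_arrangeLast (G : SimpleGraph (Fin n)) [DecidableRel G.Adj]
    (hs : ∀ ⦃u v⦄, G.Adj u v → (u ∈ s ↔ v ∉ s)) :
    D G (arrangeFirst s) + D G (arrangeLast s) = n * #G.edgeFinset := by
  rw [D, D, ← sum_add_distrib, sum_const_nat, mul_comm]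
  intro e he
  induction e using Sym2.ind with
  | h u v =>
    have huv : G.Adj u v := SimpleGraph.mem_edgeFinset.1 he
    by_cases hu : u ∈ s
    · exact edgeLen_arrangeFirst_add_edgeLen_arrangeLast hu ((hs huv).1 hu)
    · rw [Sym2.eq_swap]
      exact edgeLen_arrangeFirst_add_edgeLen_arrangeLast (not_not.1 (mt (hs huv).2 hu)) hu

end Finset

theorem SimpleGraph.IsBipartite.card_mul_card_edgeFinset_le_two_mul_Dmax {n : ℕ}
    {G : SimpleGraph (Fin n)} [DecidableRel G.Adj] (hG : G.IsBipartite) :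
    n * #G.edgeFinset ≤ 2 * Dmax G := by
  classical
  obtain ⟨s, t, hst⟩ := hG.exists_isBipartiteWith
  have hs : ∀ ⦃u v⦄, G.Adj u v → (u ∈ s.toFinset ↔ v ∉ s.toFinset) := by
    intro u v huv
    simp only [Set.mem_toFinset]
    rcases hst.mem_of_adj huv with ⟨hu, hv⟩ | ⟨hu, hv⟩
    · exact iff_of_true hu (hst.disjoint.notMem_of_mem_right hv)
    · exact iff_of_false (hst.disjoint.notMem_of_mem_right hu) (not_not.2 hv)
  rw [← D_arrangeFirst_add_D_arrangeLast G hs, two_mul]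
  exact add_le_add (le_sup (mem_univ _)) (le_sup (mem_univ _))

/-- Any tree on `n` vertices admits a linear arrangement whose sum of edge
lengths is at least `n(n-1)/2 = 1 + 2 + ⋯ + (n-1)`. -/
theorem Dmax_ge_star (n : ℕ) (G : SimpleGraph (Fin n)) [DecidableRel G.Adj]
    (hT : G.IsTree) : n * (n - 1) / 2 ≤ Dmax G := by
  have hE : #G.edgeFinset = n - 1 := by
    have := hT.card_edgeFinset
    rw [Fintype.card_fin] at this
    omega
  have := hT.isBipartite.card_mul_card_edgeFinset_le_two_mul_Dmax
  rw [hE] at this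
  exact Nat.div_le_of_le_mul this
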